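/- arXiv:2406.10463 — 2 statements merged into one kernel-verified Lean document; each statement's English description precedes it below -/
import Mathlib

section
/- If there exists a strongly non-saturated Aronszajn tree, then the Continuum Hypothesis fails. -/
noncomputable section

namespace AKST

/-- The first uncountable ordinal. -/
def ω1 : Ordinal.{0} := (Cardinal.aleph 1).ord

/-- The second uncountable ordinal. -/
def ω2 : Ordinal.{0} := (Cardinal.aleph 2).ord

/-- An `ω₁`-tree: a tree of height `ω₁` all of whose levels are countable. -/
structure O1Tree where
  A : Type
  lt : A → A → Prop
  htf : A → Ordinal.{0}
  lt_trans' : ∀ {x y z}, lt x y → lt y z → lt x z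
  ht_lt : ∀ {x y}, lt x y → htf x < htf y
  ht_lt_omega1 : ∀ x, htf x < ω1
  pred_ex : ∀ x, ∀ β < htf x, ∃ y, lt y x ∧ htf y = β
  pred_linear : ∀ {x y z}, lt y x → lt z x → lt y z ∨ y = z ∨ lt z y
  level_countable : ∀ α, {x | htf x = α}.Countable
  levels_nonempty : ∀ α < ω1, ∃ x, htf x = α

namespace O1Tree

/-- A chain: a pairwise comparable set. -/
def Chain (T : O1Tree) (C : Set T.A) : Prop :=
  ∀ x ∈ C, ∀ y ∈ C, x = y ∨ T.lt x y ∨ T.lt y x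

/-- An Aronszajn tree: an `ω₁`-tree with no uncountable chains. -/
def Aronszajn (T : O1Tree) : Prop := ∀ C : Set T.A, T.Chain C → C.Countable

/-- A downwards closed subtree. -/
def DCSubtree (T : O1Tree) (U : Set T.A) : Prop :=
  ∀ x ∈ U, ∀ y, T.lt y x → y ∈ U

/-- `U` and `W` are strongly almost disjoint: `U ∩ W` is a finite union of countable
chains. -/
def StronglyAD (T : O1Tree) (U W : Set T.A) : Prop :=
  ∃ (n : ℕ) (C : Fin n → Set T.A),
    U ∩ W = ⋃ i, C i ∧ ∀ i, T.Chain (C i) ∧ (C i).Countable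

/-- `T` is strongly non-saturated: there is a family of (at least) `ω₂`-many distinct
uncountable downwards closed subtrees of `T` which are pairwise strongly almost
disjoint. -/
def StronglyNonSaturated (T : O1Tree) : Prop :=
  ∃ Us : Ordinal → Set T.A,
    (∀ α < ω2, T.DCSubtree (Us α) ∧ ¬ (Us α).Countable) ∧
    (∀ α < ω2, ∀ β < ω2, α ≠ β → Us α ≠ Us β ∧ T.StronglyAD (Us α) (Us β))

/-- A cofinal branch of `T`. -/
def CofinalBranch (T : O1Tree) (B : Set T.A) : Prop :=
  T.Chain B ∧ T.DCSubtree B ∧ ∀ α < ω1, ∃ x ∈ B, T.htf x = α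

end O1Tree

end AKST

open AKST AKST.O1Tree

/-!
Under CH an `ω₁`-tree, having at most `ℵ₁ = 𝔠` nodes, has only `𝔠^ℵ₀ = ℵ₁` countable subsets.
In an Aronszajn tree every uncountable downwards closed subtree `U` has an infinite level, since
otherwise König's lemma at `ω₁` yields a cofinal branch. Two strongly almost disjoint subtrees
meet in finitely many nodes on each level, so the countable trace of `U` on such a level
determines `U` within the family, and a strongly non-saturated family gives `ℵ₂` distinct
countable sets.
-/

namespace AKST

open Cardinal Set

lemma countable_Iio_iff_lt_ω1 {o : Ordinal.{0}} : (Iio o).Countable ↔ o < ω1 := by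
  rw [← le_aleph0_iff_set_countable, mk_Iio_ordinal, lift_le_aleph0, ω1, lt_ord, lt_aleph_one_iff]

lemma not_countable_Iio_ω1 : ¬ (Iio ω1).Countable :=
  fun h => (countable_Iio_iff_lt_ω1.1 h).false

lemma mk_Iio_ω1 : #(Iio ω1) = lift.{1, 0} ℵ₁ := by
  rw [mk_Iio_ordinal, ω1, card_ord]

lemma aleph_two_le_mk_of_injOn {β : Type} {f : Ordinal.{0} → β} (hf : InjOn f (Iio ω2)) :
    ℵ_ 2 ≤ #β := by
  have h := lift_mk_le'.2 ⟨⟨_, hf.injective⟩⟩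
  rwa [mk_Iio_ordinal, ω2, card_ord, lift_uzero, lift_le] at h

lemma mk_countable_sets_le_continuum {α : Type*} (hα : #α ≤ 𝔠) :
    #{s : Set α // #s ≤ ℵ₀} ≤ 𝔠 :=
  calc #{s : Set α // #s ≤ ℵ₀} ≤ max #α ℵ₀ ^ ℵ₀ := mk_bounded_set_le α ℵ₀
    _ ≤ 𝔠 ^ ℵ₀ := power_le_power_right (max_le hα aleph0_le_continuum)
    _ = 𝔠 := continuum_power_aleph0

namespace O1Tree

variable (T : O1Tree)

def level (δ : Ordinal) : Set T.A := {x | T.htf x = δ}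

lemma countable_setOf_htf_le {δ : Ordinal} (hδ : δ < ω1) :
    {x : T.A | T.htf x ≤ δ}.Countable := by
  have hIic : (Iic δ).Countable := by
    rw [← Iio_insert]
    exact (countable_Iio_iff_lt_ω1.2 hδ).insert δ
  exact (hIic.biUnion fun γ _ => T.level_countable γ).mono
    fun x (hx : T.htf x ≤ δ) => mem_iUnion₂.2 ⟨_, hx, rfl⟩

lemma mk_le_aleph_one : #T.A ≤ ℵ₁ := by
  have h := lift_mk_le_lift_mk_mul_of_lift_mk_preimage_le (c := ℵ₀)
    (fun x => (⟨T.htf x, T.ht_lt_omega1 x⟩ : Iio ω1)) fun δ => by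
      rw [lift_le_aleph0, mk_le_aleph0_iff, countable_coe_iff]
      exact (T.level_countable δ).mono fun x hx => congrArg Subtype.val hx
  rwa [mk_Iio_ω1, lift_uzero, ← lift_aleph0.{1, 0}, ← lift_mul,
    mul_aleph0_eq (aleph0_le_aleph 1), lift_le] at h

variable {T}

lemma exists_le_of_htf_le {x : T.A} {δ : Ordinal} (h : δ ≤ T.htf x) :
    ∃ y, (y = x ∨ T.lt y x) ∧ T.htf y = δ := by
  rcases h.lt_or_eq with h | rfl
  · obtain ⟨y, hyx, hy⟩ := T.pred_ex x δ h
    exact ⟨y, Or.inr hyx, hy⟩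
  · exact ⟨x, Or.inl rfl, rfl⟩

lemma comparable_of_le {x y z : T.A} (hy : y = x ∨ T.lt y x) (hz : z = x ∨ T.lt z x) :
    y = z ∨ T.lt y z ∨ T.lt z y := by
  rcases hy with rfl | hy <;> rcases hz with rfl | hz
  · exact Or.inl rfl
  · exact Or.inr (Or.inr hz)
  · exact Or.inr (Or.inl hy)
  · rcases T.pred_linear hy hz with h | h | h
    exacts [Or.inr (Or.inl h), Or.inl h, Or.inr (Or.inr h)]

lemma exists_mem_level {U : Set T.A} (hU : T.DCSubtree U) (hUc : ¬ U.Countable)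
    {δ : Ordinal} (hδ : δ < ω1) : ∃ y ∈ U, T.htf y = δ := by
  obtain ⟨x, hxU, hxδ⟩ := not_subset.1 fun h => hUc ((T.countable_setOf_htf_le hδ).mono h)
  obtain ⟨y, hyx | hyx, hy⟩ := exists_le_of_htf_le (le_of_not_ge hxδ)
  · exact ⟨y, hyx ▸ hxU, hy⟩
  · exact ⟨y, hU x hxU y hyx, hy⟩

lemma Chain.eq_of_htf_eq {C : Set T.A} (hC : T.Chain C) {x y : T.A} (hx : x ∈ C) (hy : y ∈ C)
    (h : T.htf x = T.htf y) : x = y := by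
  rcases hC x hx y hy with hxy | hxy | hxy
  · exact hxy
  · exact absurd (T.ht_lt hxy) (h ▸ lt_irrefl _)
  · exact absurd (T.ht_lt hxy) (h ▸ lt_irrefl _)

lemma StronglyAD.finite_inter_level {U W : Set T.A} (h : T.StronglyAD U W) (δ : Ordinal) :
    (U ∩ W ∩ T.level δ).Finite := by
  obtain ⟨n, C, hUW, hC⟩ := h
  rw [hUW, iUnion_inter]
  exact finite_iUnion fun i => Subsingleton.finite
    fun x hx y hy => (hC i).1.eq_of_htf_eq hx.1 hy.1 (hx.2.trans hy.2.symm)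

lemma CofinalBranch.not_countable {B : Set T.A} (hB : T.CofinalBranch B) : ¬ B.Countable :=
  fun h => not_countable_Iio_ω1 <| (h.image T.htf).mono fun δ hδ => hB.2.2 δ hδ

/- König's lemma at `ω₁`: follow a uniform ultrafilter on `ω₁` through a choice of one node
per level; a node belongs to the branch when it lies below almost all chosen nodes. -/
lemma exists_cofinalBranch_of_finite_levels {U : Set T.A} (hU : T.DCSubtree U)
    (hUc : ¬ U.Countable) (hfin : ∀ δ < ω1, (U ∩ T.level δ).Finite) :
    ∃ B, T.CofinalBranch B := by
  have : Nonempty (Iio ω1) := ⟨⟨0, lt_ord.2 (Ordinal.card_zero ▸ aleph_pos 1)⟩⟩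
  let 𝒰 : Ultrafilter (Iio ω1) := Ultrafilter.of Filter.atTop
  choose xs hxsU hxs using fun δ : Iio ω1 => exists_mem_level hU hUc δ.2
  let above (y : T.A) : Set (Iio ω1) := {δ | y = xs δ ∨ T.lt y (xs δ)}
  refine ⟨{y | above y ∈ 𝒰}, fun y hy z hz => ?_, fun y hy z hzy => ?_, fun δ hδ => ?_⟩
  · obtain ⟨δ, hyδ, hzδ⟩ := 𝒰.nonempty_of_mem (s := above y ∩ above z) (Filter.inter_mem hy hz)
    exact comparable_of_le hyδ hzδ
  · refine Filter.mem_of_superset (f := 𝒰) (x := above y) hy fun δ hδ => Or.inr ?_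
    rcases hδ with rfl | hyδ
    exacts [hzy, T.lt_trans' hzy hyδ]
  · have hcover : Ici ⟨δ, hδ⟩ ⊆ ⋃ y ∈ U ∩ T.level δ, above y := fun ε hε => by
      obtain ⟨y, hyε, hy⟩ := exists_le_of_htf_le (x := xs ε) (δ := δ) ((hxs ε).symm ▸ hε)
      have hyU : y ∈ U := hyε.elim (· ▸ hxsU ε) (hU _ (hxsU ε) y)
      exact mem_biUnion ⟨hyU, hy⟩ hyε
    have hIci : Ici ⟨δ, hδ⟩ ∈ 𝒰 := Ultrafilter.of_le _ (Filter.Ici_mem_atTop _)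
    obtain ⟨y, ⟨-, hy⟩, hyδ⟩ := (Ultrafilter.finite_biUnion_mem_iff (hfin δ hδ)).1
      (Filter.mem_of_superset (f := 𝒰) hIci hcover)
    exact ⟨y, hyδ, hy⟩

lemma Aronszajn.exists_infinite_level (hA : T.Aronszajn) {U : Set T.A} (hU : T.DCSubtree U)
    (hUc : ¬ U.Countable) : ∃ δ, (U ∩ T.level δ).Infinite := by
  by_contra! hfin
  obtain ⟨B, hB⟩ := exists_cofinalBranch_of_finite_levels hU hUc fun δ _ => hfin δ
  exact hB.not_countable (hA B hB.1)

lemma Aronszajn.aleph_two_le_mk_countable_sets (hA : T.Aronszajn)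
    (hS : T.StronglyNonSaturated) : ℵ_ 2 ≤ #{s : Set T.A // #s ≤ ℵ₀} := by
  obtain ⟨Us, hUs, hAD⟩ := hS
  choose! δ hδ using fun α (hα : α < ω2) => hA.exists_infinite_level (hUs α hα).1 (hUs α hα).2
  let trace (α : Ordinal) : {s : Set T.A // #s ≤ ℵ₀} :=
    ⟨Us α ∩ T.level (δ α), ((T.level_countable _).mono inter_subset_right).le_aleph0⟩
  refine aleph_two_le_mk_of_injOn (f := trace) fun α hα β hβ hαβ => ?_
  by_contra hne
  refine hδ α hα <| ((hAD α hα β hβ hne).2.finite_inter_level (δ α)).subset fun x hx => ?_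
  have hxβ : x ∈ (trace β).1 := congrArg Subtype.val hαβ ▸ hx
  exact ⟨⟨hx.1, hxβ.1⟩, hx.2⟩

end O1Tree

end AKST

/-- if there exists a strongly non-saturated Aronszajn tree, then the
Continuum Hypothesis fails. -/
theorem stmt_14 (T : O1Tree) (hA : T.Aronszajn) (hS : T.StronglyNonSaturated) :
    2 ^ Cardinal.aleph0 ≠ Cardinal.aleph 1 := by
  intro hCH
  have hCH₀ : Cardinal.continuum.{0} = Cardinal.aleph 1 :=
    Cardinal.lift_injective.{_, 0} (by simpa using hCH)
  have h := (hA.aleph_two_le_mk_countable_sets hS).trans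
    (mk_countable_sets_le_continuum (T.mk_le_aleph_one.trans hCH₀.ge))
  rw [hCH₀] at h
  exact (Cardinal.aleph_lt_aleph.2 one_lt_two).not_ge h
end
end

section
/- Let T be an Aronszajn tree, K a Kurepa tree with cofinal branches {b_α : α < ω₂}, and for each α < ω₂ let U_α = T ⊗ b_α ⊆ T ⊗ K. Then there exist α < β < ω₂ such that U_α ∩ U_β contains an infinite antichain of T ⊗ K; in particular the family {U_α : α < ω₂} does not witness strong non-saturation of T ⊗ K. -/
noncomputable section

open AKST AKST.O1Tree

/-! If all levels of `S` were finite, an ultrafilter on `ω₁` extending the tail filter would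
pick, at every level `α`, the node through which almost all nodes above `α` pass; these nodes
form an uncountable chain. So the Aronszajn tree `S` has an infinite level `S_γ`. Only countably
many nodes of `K` lie at level `γ`, so two of the `ω₂` branches pass through a common node `k`
there, and `S_γ × {k}` is an infinite antichain in both `S ⊗ b_α` and `S ⊗ b_β`. An infinite
antichain is not covered by finitely many chains. -/

namespace AKST

lemma omega1_isSuccLimit : Order.IsSuccLimit ω1 :=
  Cardinal.isSuccLimit_ord (Cardinal.aleph0_le_aleph 1)

lemma not_countable_Iio_omega1 : ¬ (Set.Iio ω1).Countable := by
  rw [← Cardinal.le_aleph0_iff_set_countable, Cardinal.mk_Iio_ordinal, ω1, Cardinal.card_ord,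
    Cardinal.lift_le_aleph0]
  exact Cardinal.aleph0_lt_aleph_one.not_ge

lemma not_countable_Iio_omega2 : ¬ (Set.Iio ω2).Countable := fun h =>
  not_countable_Iio_omega1 <| h.mono <| Set.Iio_subset_Iio <|
    Cardinal.ord_lt_ord.mpr (Cardinal.aleph_lt_aleph.mpr one_lt_two) |>.le

lemma exists_lt_lt_mem_mem_of_countable {X : Type*} {o : Ordinal} (ho : ¬ (Set.Iio o).Countable)
    {s : Set X} (hs : s.Countable) (b : Ordinal → Set X) (hb : ∀ α < o, (b α ∩ s).Nonempty) :
    ∃ α β k, α < β ∧ β < o ∧ k ∈ s ∧ k ∈ b α ∧ k ∈ b β := by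
  obtain ⟨α₀, hα₀⟩ : (Set.Iio o).Nonempty :=
    Set.nonempty_iff_ne_empty.2 fun h => ho (h ▸ Set.countable_empty)
  have : Nonempty X := ⟨(hb α₀ hα₀).some⟩
  choose! g hgb hgs using hb
  have hninj : ¬ Set.InjOn g (Set.Iio o) := fun hinj =>
    ho (Set.MapsTo.countable_of_injOn (fun α hα => hgs α hα) hinj hs)
  simp only [Set.InjOn, not_forall] at hninj
  obtain ⟨α, hα, β, hβ, hg, hne⟩ := hninj
  rcases Ne.lt_or_gt hne with hlt | hlt
  · exact ⟨α, β, g α, hlt, hβ, hgs α hα, hgb α hα, hg ▸ hgb β hβ⟩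
  · exact ⟨β, α, g α, hlt, hα, hgs α hα, hg ▸ hgb β hβ, hgb α hα⟩

lemma IsAntichain.not_subset_iUnion_isChain {α ι : Type*} [Finite ι] {r : α → α → Prop}
    {Z : Set α} (hZ : Z.Infinite) (hanti : IsAntichain r Z) (C : ι → Set α)
    (hC : ∀ i, IsChain r (C i)) : ¬ Z ⊆ ⋃ i, C i := by
  intro hsub
  refine hZ (Set.Finite.subset (Set.finite_iUnion fun i =>
    (inter_subsingleton_of_isChain_of_isAntichain (hC i) hanti).finite) fun z hz => ?_)
  obtain ⟨i, hi⟩ := Set.mem_iUnion.mp (hsub hz)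
  exact Set.mem_iUnion.mpr ⟨i, hi, hz⟩

namespace O1Tree

variable (T : O1Tree)

lemma lt_irrefl (x : T.A) : ¬ T.lt x x := fun h => (T.ht_lt h).false

variable {T}

lemma lt_of_lt_of_lt_of_htf_lt {x y z : T.A} (hy : T.lt y x) (hz : T.lt z x)
    (h : T.htf y < T.htf z) : T.lt y z := by
  rcases T.pred_linear hy hz with hyz | rfl | hzy
  · exact hyz
  · exact absurd h (_root_.lt_irrefl _)
  · exact absurd (T.ht_lt hzy) h.not_gt

theorem exists_uncountable_chain_of_finite_levels (hfin : ∀ γ, {x | T.htf x = γ}.Finite) :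
    ∃ C, T.Chain C ∧ ¬ C.Countable := by
  let ι := Set.Iio ω1
  have : Nonempty ι := ⟨⟨0, omega1_isSuccLimit.bot_lt⟩⟩
  let U : Ultrafilter ι := .of Filter.atTop
  -- placing `x β` one level above `β` makes every level `α ≤ β` a strict predecessor level
  have hx (β : ι) : ∃ x, T.htf x = Order.succ β.1 :=
    T.levels_nonempty _ (omega1_isSuccLimit.succ_lt β.2)
  choose x hx using hx
  have : Nonempty T.A := ⟨x (Classical.arbitrary ι)⟩
  have hg (α β : ι) (hαβ : α ≤ β) : ∃ y, T.lt y (x β) ∧ T.htf y = α :=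
    T.pred_ex _ _ ((hx β).symm ▸ Order.lt_succ_of_le hαβ)
  choose! g hgx hght using hg
  have hge (α : ι) : ∀ᶠ β in U, α ≤ β := Ultrafilter.of_le _ (Filter.eventually_ge_atTop α)
  have hb (α : ι) : ∃ y, T.htf y = α ∧ ∀ᶠ β in U, g α β = y := by
    obtain ⟨y, hy, hUy⟩ := Ultrafilter.eq_pure_of_finite_mem (f := U.map (g α)) (hfin α)
      ((hge α).mono fun β hβ => hght α β hβ)
    have hy' : ({y} : Set T.A) ∈ U.map (g α) := hUy ▸ Set.mem_singleton y
    exact ⟨y, hy, hy'⟩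
  choose b hbht hbU using hb
  have hbmono {α α' : ι} (h : α < α') : T.lt (b α) (b α') := by
    obtain ⟨β, hβ, hβα, hβα'⟩ := ((hge α').and ((hbU α).and (hbU α'))).exists
    exact lt_of_lt_of_lt_of_htf_lt (hβα ▸ hgx α β (h.le.trans hβ)) (hβα' ▸ hgx α' β hβ)
      (by simpa [hbht])
  refine ⟨Set.range b, ?_, fun hC => not_countable_Iio_omega1 ((hC.image T.htf).mono ?_)⟩
  · rintro _ ⟨α, rfl⟩ _ ⟨α', rfl⟩
    rcases lt_trichotomy α α' with h | rfl | h
    · exact .inr (.inl (hbmono h))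
    · exact .inl rfl
    · exact .inr (.inr (hbmono h))
  · exact fun o ho => ⟨b ⟨o, ho⟩, ⟨_, rfl⟩, hbht _⟩

theorem Aronszajn.exists_infinite_level_s15 (hT : T.Aronszajn) : ∃ γ, {x | T.htf x = γ}.Infinite := by
  by_contra! h
  obtain ⟨C, hC, hunc⟩ := exists_uncountable_chain_of_finite_levels h
  exact hunc (hT C hC)

end O1Tree

end AKST

theorem stmt_15_general (S K : O1Tree) (hA : S.Aronszajn)
    (b : Ordinal → Set K.A)
    (hb : ∀ α < ω2, K.CofinalBranch (b α)) :
    ∃ α β, α < β ∧ β < ω2 ∧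
      ∃ Z : Set (S.A × K.A),
        Z ⊆ ({p | S.htf p.1 = K.htf p.2 ∧ p.2 ∈ b α} ∩
             {p | S.htf p.1 = K.htf p.2 ∧ p.2 ∈ b β}) ∧
        Z.Infinite ∧
        (∀ p ∈ Z, ∀ q ∈ Z, p ≠ q →
          ¬(S.lt p.1 q.1 ∧ K.lt p.2 q.2) ∧ ¬(S.lt q.1 p.1 ∧ K.lt q.2 p.2)) ∧
        ¬ (∃ (n : ℕ) (C : Fin n → Set (S.A × K.A)),
            ({p | S.htf p.1 = K.htf p.2 ∧ p.2 ∈ b α} ∩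
             {p | S.htf p.1 = K.htf p.2 ∧ p.2 ∈ b β}) = ⋃ i, C i ∧
            ∀ i, (C i).Countable ∧
              ∀ p ∈ C i, ∀ q ∈ C i,
                p = q ∨ (S.lt p.1 q.1 ∧ K.lt p.2 q.2) ∨ (S.lt q.1 p.1 ∧ K.lt q.2 p.2)) := by
  obtain ⟨γ, hγ⟩ := hA.exists_infinite_level_s15
  have hγω1 : γ < ω1 := by
    obtain ⟨s, rfl⟩ := hγ.nonempty
    exact S.ht_lt_omega1 s
  obtain ⟨α, β, k, hαβ, hβ, hkγ, hkα, hkβ⟩ :=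
    exists_lt_lt_mem_mem_of_countable not_countable_Iio_omega2 (K.level_countable γ) b
      fun α hα => (hb α hα).2.2 γ hγω1
  let Z : Set (S.A × K.A) := (·, k) '' {s | S.htf s = γ}
  have hZsub : Z ⊆ ({p | S.htf p.1 = K.htf p.2 ∧ p.2 ∈ b α} ∩
      {p | S.htf p.1 = K.htf p.2 ∧ p.2 ∈ b β}) := by
    rintro _ ⟨s, hs, rfl⟩
    exact ⟨⟨hs.trans hkγ.symm, hkα⟩, hs.trans hkγ.symm, hkβ⟩
  have hZinf : Z.Infinite := hγ.image (Prod.mk_left_injective k).injOn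
  have hanti : IsAntichain (fun p q => S.lt p.1 q.1 ∧ K.lt p.2 q.2) Z := by
    rintro _ ⟨s, -, rfl⟩ _ ⟨t, -, rfl⟩ - ⟨-, hk⟩
    exact K.lt_irrefl k hk
  refine ⟨α, β, hαβ, hβ, Z, hZsub, hZinf,
    fun p hp q hq hpq => ⟨hanti hp hq hpq, hanti hq hp hpq.symm⟩, ?_⟩
  rintro ⟨n, C, hU, hC⟩
  exact hanti.not_subset_iUnion_isChain hZinf C
    (fun i p hp q hq hpq => ((hC i).2 p hp q hq).resolve_left hpq) (hU ▸ hZsub)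

/-- for an Aronszajn tree `S` and a Kurepa tree `K` with distinct cofinal
branches `b α` (`α < ω₂`), setting `U_α = S ⊗ b_α ⊆ S ⊗ K`, there are `α < β < ω₂` such
that `U_α ∩ U_β` contains an infinite antichain of `S ⊗ K`; in particular the family
`{U_α}` does not witness strong non-saturation of `S ⊗ K`. -/
theorem stmt_15 (S K : O1Tree) (hA : S.Aronszajn)
    (b : Ordinal → Set K.A)
    (hb : ∀ α < ω2, K.CofinalBranch (b α))
    (hdist : ∀ α < ω2, ∀ β < ω2, α ≠ β → b α ≠ b β) :
    ∃ α β, α < β ∧ β < ω2 ∧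
      ∃ Z : Set (S.A × K.A),
        Z ⊆ ({p | S.htf p.1 = K.htf p.2 ∧ p.2 ∈ b α} ∩
             {p | S.htf p.1 = K.htf p.2 ∧ p.2 ∈ b β}) ∧
        Z.Infinite ∧
        (∀ p ∈ Z, ∀ q ∈ Z, p ≠ q →
          ¬(S.lt p.1 q.1 ∧ K.lt p.2 q.2) ∧ ¬(S.lt q.1 p.1 ∧ K.lt q.2 p.2)) ∧
        ¬ (∃ (n : ℕ) (C : Fin n → Set (S.A × K.A)),
            ({p | S.htf p.1 = K.htf p.2 ∧ p.2 ∈ b α} ∩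
             {p | S.htf p.1 = K.htf p.2 ∧ p.2 ∈ b β}) = ⋃ i, C i ∧
            ∀ i, (C i).Countable ∧
              ∀ p ∈ C i, ∀ q ∈ C i,
                p = q ∨ (S.lt p.1 q.1 ∧ K.lt p.2 q.2) ∨ (S.lt q.1 p.1 ∧ K.lt q.2 p.2)) :=
  stmt_15_general S K hA b hb
end
end
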